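/- arXiv:2507.17279 — 3 statements merged into one kernel-verified Lean document; each statement's English description precedes it below -/
import Mathlib

section
/- For any two density matrices ρ₁ ≠ ρ₂ on a finite-dimensional Hilbert space, lim_{n→∞} ‖ρ₁^{⊗n} − ρ₂^{⊗n}‖₁ = 2. -/
open Matrix Kronecker BigOperators
open scoped ComplexOrder

noncomputable def traceNorm {ι : Type*} [Fintype ι] [DecidableEq ι] (A : Matrix ι ι ℂ) : ℝ :=
  (((Matrix.posSemidef_conjTranspose_mul_self A).1.eigenvectorUnitary.1 *
      diagonal (((↑) : ℝ → ℂ) ∘ Real.sqrt ∘ (Matrix.posSemidef_conjTranspose_mul_self A).1.eigenvalues) *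
      (star (Matrix.posSemidef_conjTranspose_mul_self A).1.eigenvectorUnitary : Matrix ι ι ℂ)).trace).re

def IsDensity {ι : Type*} [Fintype ι] [DecidableEq ι] (ρ : Matrix ι ι ℂ) : Prop :=
  ρ.PosSemidef ∧ ρ.trace = 1

noncomputable def kronPow {ι : Type*} [Fintype ι] (A : Matrix ι ι ℂ) (k : ℕ) :
    Matrix (Fin k → ι) (Fin k → ι) ℂ :=
  Matrix.of fun x y => ∏ i, A (x i) (y i)

def choiMatrix {ι κ : Type*} [Fintype ι] [DecidableEq ι] [Fintype κ]
    (Λ : Matrix ι ι ℂ →ₗ[ℂ] Matrix κ κ ℂ) : Matrix (ι × κ) (ι × κ) ℂ :=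
  Matrix.of fun p q => Λ (Matrix.single p.1 q.1 1) p.2 q.2

def IsCPTP {ι κ : Type*} [Fintype ι] [DecidableEq ι] [Fintype κ]
    (Λ : Matrix ι ι ℂ →ₗ[ℂ] Matrix κ κ ℂ) : Prop :=
  (choiMatrix Λ).PosSemidef ∧ ∀ A, (Λ A).trace = A.trace

def IsHPTP {ι κ : Type*} [Fintype ι] [Fintype κ]
    (Λ : Matrix ι ι ℂ →ₗ[ℂ] Matrix κ κ ℂ) : Prop :=
  (∀ A, A.IsHermitian → (Λ A).IsHermitian) ∧ ∀ A, (Λ A).trace = A.trace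

noncomputable def proj {ι : Type*} (ψ : ι → ℂ) : Matrix ι ι ℂ := Matrix.vecMulVec ψ (star ψ)

noncomputable def overlap {ι : Type*} [Fintype ι] (ψ φ : ι → ℂ) : ℂ := ∑ i, (starRingEnd ℂ) (ψ i) * φ i

section PSDSqrt
open scoped MatrixOrder

noncomputable def Matrix.PosSemidef.sqrt {ι : Type*} [Fintype ι] [DecidableEq ι] {A : Matrix ι ι ℂ}
    (hA : A.PosSemidef) : Matrix ι ι ℂ :=
  hA.1.eigenvectorUnitary.1 * diagonal (((↑) : ℝ → ℂ) ∘ Real.sqrt ∘ hA.1.eigenvalues) *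
    (star hA.1.eigenvectorUnitary : Matrix ι ι ℂ)

lemma Matrix.PosSemidef.sqrt_eq_cfc {ι : Type*} [Fintype ι] [DecidableEq ι] {A : Matrix ι ι ℂ}
    (hA : A.PosSemidef) : hA.sqrt = CFC.sqrt A := by
  have h0 : (0 : Matrix ι ι ℂ) ≤ A := Matrix.nonneg_iff_posSemidef.mpr hA
  rw [CFC.sqrt_eq_cfc, cfc_nnreal_eq_real _ A, hA.1.cfc_eq]
  simp only [IsHermitian.cfc, Unitary.conjStarAlgAut_apply, Matrix.PosSemidef.sqrt]
  congr 3
  funext i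
  simp [Real.sqrt_eq_cases, hA.eigenvalues_nonneg i, Real.coe_sqrt]

lemma Matrix.PosSemidef.sqrt_mul_self {ι : Type*} [Fintype ι] [DecidableEq ι] {A : Matrix ι ι ℂ}
    (hA : A.PosSemidef) : hA.sqrt * hA.sqrt = A := by
  rw [hA.sqrt_eq_cfc]
  exact CFC.sqrt_mul_sqrt_self A (Matrix.nonneg_iff_posSemidef.mpr hA)

lemma Matrix.PosSemidef.posSemidef_sqrt {ι : Type*} [Fintype ι] [DecidableEq ι] {A : Matrix ι ι ℂ}
    (hA : A.PosSemidef) : hA.sqrt.PosSemidef := by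
  rw [hA.sqrt_eq_cfc]
  exact Matrix.nonneg_iff_posSemidef.mp (CFC.sqrt_nonneg A)

lemma Matrix.PosSemidef.eq_sqrt_of_sq_eq {ι : Type*} [Fintype ι] [DecidableEq ι] {A B : Matrix ι ι ℂ}
    (hA : A.PosSemidef) (hB : B.PosSemidef) (h : A ^ 2 = B) : A = hB.sqrt := by
  rw [hB.sqrt_eq_cfc]
  exact (CFC.sqrt_unique (by rw [← sq]; exact h) (Matrix.nonneg_iff_posSemidef.mpr hA)).symm

end PSDSqrt

namespace VC
variable {ι : Type*} [Fintype ι] [DecidableEq ι] {H : Matrix ι ι ℂ}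

noncomputable def mfun (hH : H.IsHermitian) (f : ℝ → ℝ) : Matrix ι ι ℂ :=
  (hH.eigenvectorUnitary : Matrix ι ι ℂ) *
    Matrix.diagonal (fun i => (f (hH.eigenvalues i) : ℂ)) *
    star (hH.eigenvectorUnitary : Matrix ι ι ℂ)

lemma mfun_mul (hH : H.IsHermitian) (f g : ℝ → ℝ) :
    mfun hH f * mfun hH g = mfun hH (fun x => f x * g x) := by
  unfold mfun
  set U : Matrix ι ι ℂ := (hH.eigenvectorUnitary : Matrix ι ι ℂ)
  have h1 : star U * U = 1 := Matrix.mem_unitaryGroup_iff'.mp hH.eigenvectorUnitary.2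
  calc (U * diagonal (fun i => (f (hH.eigenvalues i) : ℂ)) * star U) *
      (U * diagonal (fun i => (g (hH.eigenvalues i) : ℂ)) * star U)
      = U * (diagonal (fun i => (f (hH.eigenvalues i) : ℂ)) * (star U * U) *
        diagonal (fun i => (g (hH.eigenvalues i) : ℂ))) * star U := by
        simp only [Matrix.mul_assoc]
    _ = _ := by
        rw [h1, Matrix.mul_one, diagonal_mul_diagonal]
        push_cast
        rfl

lemma mfun_congr (hH : H.IsHermitian) {f g : ℝ → ℝ}
    (h : ∀ i, f (hH.eigenvalues i) = g (hH.eigenvalues i)) : mfun hH f = mfun hH g := by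
  unfold mfun
  rw [show (fun i => (f (hH.eigenvalues i) : ℂ)) = (fun i => (g (hH.eigenvalues i) : ℂ)) from
    funext fun i => by rw [h i]]

lemma mfun_zero (hH : H.IsHermitian) : mfun hH (fun _ => (0:ℝ)) = 0 := by
  unfold mfun
  simp

lemma mfun_id (hH : H.IsHermitian) : mfun hH (fun x => x) = H := by
  rw [mfun]; exact (hH.spectral_theorem).symm

lemma mfun_add (hH : H.IsHermitian) (f g : ℝ → ℝ) :
    mfun hH f + mfun hH g = mfun hH (fun x => f x + g x) := by
  unfold mfun
  rw [← Matrix.add_mul, ← Matrix.mul_add, diagonal_add]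
  push_cast
  rfl

lemma mfun_neg (hH : H.IsHermitian) (f : ℝ → ℝ) :
    -mfun hH f = mfun hH (fun x => -(f x)) := by
  have h := mfun_add hH f (fun x => -(f x))
  rw [mfun_congr hH (f := fun x => f x + -f x) (g := fun _ => 0) (fun i => by ring), mfun_zero] at h
  exact neg_eq_of_add_eq_zero_right h

lemma mfun_sub (hH : H.IsHermitian) (f g : ℝ → ℝ) :
    mfun hH f - mfun hH g = mfun hH (fun x => f x - g x) := by
  rw [sub_eq_add_neg, mfun_neg, mfun_add]
  exact mfun_congr hH fun i => by ring

lemma mfun_one (hH : H.IsHermitian) : mfun hH (fun _ => 1) = 1 := by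
  unfold mfun
  rw [show (Matrix.diagonal (fun _ : ι => ((1:ℝ) : ℂ))) = 1 by simp, Matrix.mul_one]
  simpa using (Matrix.mem_unitaryGroup_iff).mp hH.eigenvectorUnitary.2

lemma mfun_posSemidef (hH : H.IsHermitian) {f : ℝ → ℝ} (hf : ∀ x, 0 ≤ f x) :
    (mfun hH f).PosSemidef := by
  unfold mfun
  rw [star_eq_conjTranspose]
  exact (posSemidef_diagonal_iff.mpr fun i => by
    simpa using Complex.zero_le_real.mpr (hf _)).mul_mul_conjTranspose_same _

lemma trace_mfun (hH : H.IsHermitian) (f : ℝ → ℝ) :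
    (mfun hH f).trace = ∑ i, (f (hH.eigenvalues i) : ℂ) := by
  unfold mfun
  rw [Matrix.trace_mul_cycle]
  have h1 : star (hH.eigenvectorUnitary : Matrix ι ι ℂ) * (hH.eigenvectorUnitary : Matrix ι ι ℂ) = 1 := by
    simpa using (Matrix.mem_unitaryGroup_iff').mp hH.eigenvectorUnitary.2
  rw [h1, Matrix.one_mul, Matrix.trace_diagonal]


lemma diag_re_nonneg {X : Matrix ι ι ℂ} (hX : X.PosSemidef) (i : ι) : 0 ≤ (X i i).re := by
  have h := hX.re_dotProduct_nonneg (Pi.single i 1)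
  have e : dotProduct (star (Pi.single i 1)) (X *ᵥ Pi.single i 1) = X i i := by
    simp [dotProduct, Matrix.mulVec_single, Pi.single_apply, apply_ite]
  rwa [e] at h

lemma trace_re_nonneg_of_posSemidef {X : Matrix ι ι ℂ} (hX : X.PosSemidef) :
    0 ≤ (X.trace).re := by
  rw [Matrix.trace]
  simp only [Complex.re_sum]
  exact Finset.sum_nonneg fun i _ => diag_re_nonneg hX i

lemma trace_mul_re_nonneg {X Y : Matrix ι ι ℂ} (hX : X.PosSemidef) (hY : Y.PosSemidef) :
    0 ≤ ((X * Y).trace).re := by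
  have hs := hX.posSemidef_sqrt.isHermitian
  have h1 : (X * Y).trace = (hX.sqrt * Y * hX.sqrtᴴ).trace := by
    rw [hs.eq, Matrix.trace_mul_cycle, hX.sqrt_mul_self]
  rw [h1]
  exact trace_re_nonneg_of_posSemidef (hY.mul_mul_conjTranspose_same _)

lemma trace_mul_star_self {A B : Matrix ι ι ℂ} (hA : A.IsHermitian) (hB : B.IsHermitian) :
    (starRingEnd ℂ) ((A * B).trace) = (A * B).trace := by
  have : ((A * B)ᴴ).trace = star ((A * B).trace) := Matrix.trace_conjTranspose _
  rw [Matrix.conjTranspose_mul, hA.eq, hB.eq, Matrix.trace_mul_comm] at this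
  exact this.symm

lemma trace_mul_eq_re {A B : Matrix ι ι ℂ} (hA : A.IsHermitian) (hB : B.IsHermitian) :
    (A * B).trace = (((A * B).trace).re : ℂ) :=
  (Complex.conj_eq_iff_re.mp (trace_mul_star_self hA hB)).symm

lemma traceNorm_hermitian (hH : H.IsHermitian) :
    traceNorm H = ∑ i, |hH.eigenvalues i| := by
  have habs : mfun hH (fun x => |x|) = (Matrix.posSemidef_conjTranspose_mul_self H).sqrt := by
    refine (mfun_posSemidef hH fun x => abs_nonneg x).eq_sqrt_of_sq_eq _ ?_
    rw [sq, mfun_mul, hH.eq]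
    conv_rhs => rw [← mfun_id hH]
    rw [mfun_mul]
    exact mfun_congr hH fun i => abs_mul_abs_self _
  rw [show traceNorm H = ((posSemidef_conjTranspose_mul_self H).sqrt.trace).re from rfl, ← habs, trace_mfun]
  simp

lemma trace_mul_diag {M : Matrix ι ι ℂ} {d : ι → ℂ} :
    (M * Matrix.diagonal d).trace = ∑ i, M i i * d i := by
  simp [Matrix.trace, Matrix.diag, Matrix.mul_diagonal]

lemma trace_mul_re_le_traceNorm (hH : H.IsHermitian) {C : Matrix ι ι ℂ}
    (h1 : (1 - C).PosSemidef) (h2 : (1 + C).PosSemidef) :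
    ((C * H).trace).re ≤ traceNorm H := by
  set U : Matrix ι ι ℂ := (hH.eigenvectorUnitary : Matrix ι ι ℂ) with hU
  set M : Matrix ι ι ℂ := star U * C * U with hM
  have key : (C * H).trace = (M * Matrix.diagonal (fun i => (hH.eigenvalues i : ℂ))).trace := by
    conv_lhs => rw [hH.spectral_theorem, Unitary.conjStarAlgAut_apply]
    rw [← Matrix.mul_assoc, ← Matrix.mul_assoc, Matrix.trace_mul_cycle, hM]
    simp only [Matrix.mul_assoc]
    rfl
  have hdiag : ∀ i : ι, |(M i i).re| ≤ 1 := by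
    intro i
    have hm1 : (star U * (1 - C) * U).PosSemidef := by
      rw [Matrix.star_eq_conjTranspose]
      exact h1.conjTranspose_mul_mul_same U
    have hm2 : (star U * (1 + C) * U).PosSemidef := by
      rw [Matrix.star_eq_conjTranspose]
      exact h2.conjTranspose_mul_mul_same U
    have hUU : star U * U = 1 := Matrix.mem_unitaryGroup_iff'.mp hH.eigenvectorUnitary.2
    have e1 : star U * (1 - C) * U = 1 - M := by
      rw [Matrix.mul_sub, Matrix.mul_one, Matrix.sub_mul, hUU, hM]
    have e2 : star U * (1 + C) * U = 1 + M := by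
      rw [Matrix.mul_add, Matrix.mul_one, Matrix.add_mul, hUU, hM]
    have d1 := diag_re_nonneg (e1 ▸ hm1) i
    have d2 := diag_re_nonneg (e2 ▸ hm2) i
    simp only [Matrix.sub_apply, Matrix.add_apply, Matrix.one_apply_eq, Complex.sub_re,
      Complex.add_re, Complex.one_re] at d1 d2
    rw [abs_le]
    constructor <;> linarith
  rw [key, trace_mul_diag, traceNorm_hermitian hH]
  simp only [Complex.re_sum]
  refine Finset.sum_le_sum fun i _ => ?_
  have : (M i i * (hH.eigenvalues i : ℂ)).re = (M i i).re * hH.eigenvalues i := by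
    simp [Complex.mul_re]
  rw [this]
  calc (M i i).re * hH.eigenvalues i ≤ |(M i i).re * hH.eigenvalues i| := le_abs_self _
    _ = |(M i i).re| * |hH.eigenvalues i| := abs_mul _ _
    _ ≤ 1 * |hH.eigenvalues i| := by
        exact mul_le_mul_of_nonneg_right (hdiag i) (abs_nonneg _)
    _ = _ := one_mul _


lemma pp_mul (x : ℝ) : (if 0 < x then (1:ℝ) else 0) * x = max x 0 := by
  by_cases h : 0 < x
  · simp [h, max_eq_left h.le]
  · push_neg at h
    simp [if_neg (not_lt.mpr h), max_eq_right h]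

lemma pm_mul (x : ℝ) : (if x < 0 then (1:ℝ) else 0) * x = -(max (-x) 0) := by
  by_cases h : x < 0
  · simp [h, max_eq_left (by linarith : (0:ℝ) ≤ -x)]
  · push_neg at h
    simp [if_neg (not_lt.mpr h), max_eq_right (by linarith : -x ≤ 0)]

lemma powers_stormer {ρ σ : Matrix ι ι ℂ} (hρ : ρ.PosSemidef) (hσ : σ.PosSemidef)
    (tρ : ρ.trace = 1) (tσ : σ.trace = 1) :
    2 - 2 * ((hρ.sqrt * hσ.sqrt).trace).re ≤ traceNorm (ρ - σ) := by
  set R := hρ.sqrt with hRdef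
  set Q := hσ.sqrt with hQdef
  have hRh : R.IsHermitian := hρ.posSemidef_sqrt.isHermitian
  have hQh : Q.IsHermitian := hσ.posSemidef_sqrt.isHermitian
  have hS : (R - Q).IsHermitian := hRh.sub hQh
  set S : Matrix ι ι ℂ := R - Q with hSdef
  set Sp := mfun hS (fun x => max x 0) with hSp
  set Sm := mfun hS (fun x => max (-x) 0) with hSm
  set Pp := mfun hS (fun x => if 0 < x then (1:ℝ) else 0) with hPp
  set Pm := mfun hS (fun x => if x < 0 then (1:ℝ) else 0) with hPm
  have hSid : mfun hS (fun x => x) = S := mfun_id hS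
  have hdecomp : ρ - σ = S * R + Q * S := by
    rw [hSdef, Matrix.sub_mul, Matrix.mul_sub, hρ.sqrt_mul_self, hσ.sqrt_mul_self]
    abel
  have PpS : Pp * S = Sp := by
    rw [← hSid, hPp, mfun_mul, hSp]
    exact mfun_congr hS fun i => pp_mul _
  have SPp : S * Pp = Sp := by
    rw [← hSid, hPp, mfun_mul, hSp]
    exact mfun_congr hS fun i => by rw [mul_comm]; exact pp_mul _
  have PmS : Pm * S = -Sm := by
    rw [← hSid, hPm, mfun_mul, hSm, mfun_neg]
    exact mfun_congr hS fun i => pm_mul _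
  have SPm : S * Pm = -Sm := by
    rw [← hSid, hPm, mfun_mul, hSm, mfun_neg]
    exact mfun_congr hS fun i => by rw [mul_comm]; exact pm_mul _
  -- trace identities
  have t1 : ((Pp - Pm) * (ρ - σ)).trace = (Sp * (R + Q)).trace + (Sm * (R + Q)).trace := by
    rw [hdecomp]
    have a1 : (Pp * (S * R)).trace = (Sp * R).trace := by rw [← Matrix.mul_assoc, PpS]
    have a2 : (Pp * (Q * S)).trace = (Sp * Q).trace := by
      rw [Matrix.trace_mul_comm, Matrix.mul_assoc, SPp, Matrix.trace_mul_comm]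
    have a3 : (Pm * (S * R)).trace = -(Sm * R).trace := by
      rw [← Matrix.mul_assoc, PmS, Matrix.neg_mul, Matrix.trace_neg]
    have a4 : (Pm * (Q * S)).trace = -(Sm * Q).trace := by
      rw [Matrix.trace_mul_comm, Matrix.mul_assoc, SPm, Matrix.mul_neg, Matrix.trace_neg,
        Matrix.trace_mul_comm]
    simp only [Matrix.sub_mul, Matrix.mul_add, Matrix.trace_sub, Matrix.trace_add, a1, a2, a3, a4]
    ring
  -- lower bounds for the two traces
  have hSp_psd : Sp.PosSemidef := mfun_posSemidef hS fun x => le_max_right _ _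
  have hSm_psd : Sm.PosSemidef := mfun_posSemidef hS fun x => le_max_right _ _
  have eSp : Sp * (R + Q) = Sp * (Q + Q) + Sp * S := by
    rw [← Matrix.mul_add]
    congr 1
    rw [hSdef]; abel
  have eSm : Sm * (R + Q) = Sm * (R + R) - Sm * S := by
    rw [← Matrix.mul_sub]
    congr 1
    rw [hSdef]; abel
  have trSpS : ((Sp * S).trace).re = ∑ i, (max (hS.eigenvalues i) 0)^2 := by
    have e : Sp * S = mfun hS (fun x => (max x 0)^2) := by
      conv_lhs => rw [← hSid]
      rw [hSp, mfun_mul]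
      exact mfun_congr hS fun i => by
        rcases le_or_gt (hS.eigenvalues i) 0 with h | h
        · simp [max_eq_right h]
        · simp [max_eq_left h.le]; ring
    rw [e, trace_mfun]
    simp [Complex.re_sum, ← Complex.ofReal_pow]
  have trSmS : ((Sm * S).trace).re = -∑ i, (max (-(hS.eigenvalues i)) 0)^2 := by
    have e : Sm * S = mfun hS (fun x => -(max (-x) 0)^2) := by
      conv_lhs => rw [← hSid]
      rw [hSm, mfun_mul]
      exact mfun_congr hS fun i => by
        rcases le_or_gt (hS.eigenvalues i) 0 with h | h
        · rw [max_eq_left (by linarith : (0:ℝ) ≤ -(hS.eigenvalues i))]; ring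
        · rw [max_eq_right (by linarith : -(hS.eigenvalues i) ≤ 0)]; ring
    rw [e, trace_mfun]
    simp [Complex.re_sum, ← Complex.ofReal_pow]
  have hb1 : 0 ≤ ((Sp * (Q + Q)).trace).re := trace_mul_re_nonneg hSp_psd (hσ.posSemidef_sqrt.add hσ.posSemidef_sqrt)
  have hb2 : 0 ≤ ((Sm * (R + R)).trace).re := trace_mul_re_nonneg hSm_psd (hρ.posSemidef_sqrt.add hρ.posSemidef_sqrt)
  have keylow : ∑ i, (hS.eigenvalues i)^2 ≤ (((Pp - Pm) * (ρ - σ)).trace).re := by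
    rw [t1, eSp, eSm]
    simp only [Matrix.trace_add, Matrix.trace_sub, Complex.add_re, Complex.sub_re, trSpS, trSmS]
    have : ∀ x : ℝ, x^2 = (max x 0)^2 + (max (-x) 0)^2 := by
      intro x
      rcases le_or_gt x 0 with h | h
      · rw [max_eq_right h, max_eq_left (by linarith : (0:ℝ) ≤ -x)]; ring
      · rw [max_eq_left h.le, max_eq_right (by linarith : -x ≤ 0)]; ring
    rw [Finset.sum_congr rfl fun i _ => this (hS.eigenvalues i), Finset.sum_add_distrib]
    linarith
  -- sum of eigenvalue squares equals 2 - 2 Re tr(RQ)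
  have trS2 : ((S * S).trace).re = 2 - 2 * ((R * Q).trace).re := by
    have e : S * S = ρ - R * Q - (Q * R - σ) := by
      rw [hSdef, Matrix.sub_mul, Matrix.mul_sub, Matrix.mul_sub, hρ.sqrt_mul_self,
        hσ.sqrt_mul_self]
    have tQR : ((Q * R).trace).re = ((R * Q).trace).re := by rw [Matrix.trace_mul_comm]
    rw [e]
    simp only [Matrix.trace_sub, Complex.sub_re, tρ, tσ]
    rw [tQR]
    simp only [Complex.one_re]
    ring
  have trS2' : ((S * S).trace).re = ∑ i, (hS.eigenvalues i)^2 := by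
    have e : S * S = mfun hS (fun x => x^2) := by
      conv_lhs => rw [← hSid]
      rw [mfun_mul]
      exact mfun_congr hS fun i => (sq (hS.eigenvalues i)).symm
    rw [e, trace_mfun]
    simp [Complex.re_sum, ← Complex.ofReal_pow]
  -- contraction bound
  have hherm : (ρ - σ).IsHermitian := hρ.isHermitian.sub hσ.isHermitian
  have hC1 : (1 - (Pp - Pm)).PosSemidef := by
    rw [← mfun_one hS, hPp, hPm, mfun_sub, mfun_sub]
    exact mfun_posSemidef hS fun x => by split_ifs <;> norm_num <;> linarith
  have hC2 : (1 + (Pp - Pm)).PosSemidef := by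
    rw [← mfun_one hS, hPp, hPm, mfun_sub, mfun_add]
    exact mfun_posSemidef hS fun x => by split_ifs <;> norm_num <;> linarith
  have final := trace_mul_re_le_traceNorm hherm hC1 hC2
  calc 2 - 2 * ((R * Q).trace).re = ((S * S).trace).re := trS2.symm
    _ = ∑ i, (hS.eigenvalues i)^2 := trS2'
    _ ≤ (((Pp - Pm) * (ρ - σ)).trace).re := keylow
    _ ≤ traceNorm (ρ - σ) := final

lemma traceNorm_sub_le_two {ρ σ : Matrix ι ι ℂ} (hρ : ρ.PosSemidef) (hσ : σ.PosSemidef)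
    (tρ : ρ.trace = 1) (tσ : σ.trace = 1) :
    traceNorm (ρ - σ) ≤ 2 := by
  have hH : (ρ - σ).IsHermitian := hρ.isHermitian.sub hσ.isHermitian
  set Cc := mfun hH (fun x => if 0 ≤ x then (1:ℝ) else -1) with hCc
  have hCH : (Cc * (ρ - σ)).trace = ∑ i, ((|hH.eigenvalues i| : ℝ) : ℂ) := by
    have e : Cc * (ρ - σ) = mfun hH (fun x => |x|) := by
      conv_lhs => rw [show ρ - σ = mfun hH (fun x => x) from (mfun_id hH).symm]
      rw [hCc, mfun_mul]
      exact mfun_congr hH fun i => by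
        split_ifs with h
        · rw [one_mul, abs_of_nonneg h]
        · push_neg at h
          rw [abs_of_neg h]; ring
    rw [e, trace_mfun]
  have hC1 : (1 - Cc).PosSemidef := by
    rw [← mfun_one hH, hCc, mfun_sub]
    exact mfun_posSemidef hH fun x => by split_ifs <;> norm_num
  have hC2 : (1 + Cc).PosSemidef := by
    rw [← mfun_one hH, hCc, mfun_add]
    exact mfun_posSemidef hH fun x => by split_ifs <;> norm_num
  have hbound1 : ((Cc * ρ).trace).re ≤ 1 := by
    have h := trace_mul_re_nonneg hC1 hρ
    rw [Matrix.sub_mul, Matrix.one_mul, Matrix.trace_sub, Complex.sub_re] at h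
    have : (ρ.trace).re = 1 := by rw [tρ]; norm_num
    linarith
  have hbound2 : -1 ≤ ((Cc * σ).trace).re := by
    have h := trace_mul_re_nonneg hC2 hσ
    rw [Matrix.add_mul, Matrix.one_mul, Matrix.trace_add, Complex.add_re] at h
    have : (σ.trace).re = 1 := by rw [tσ]; norm_num
    linarith
  have : traceNorm (ρ - σ) = ((Cc * (ρ - σ)).trace).re := by
    rw [hCH, traceNorm_hermitian hH]
    simp [Complex.re_sum]
  rw [this, Matrix.mul_sub, Matrix.trace_sub, Complex.sub_re]
  linarith


lemma re_trace_sqrt_mul_lt_one {ρ σ : Matrix ι ι ℂ} (hρ : ρ.PosSemidef) (hσ : σ.PosSemidef)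
    (tρ : ρ.trace = 1) (tσ : σ.trace = 1) (hne : ρ ≠ σ) :
    ((hρ.sqrt * hσ.sqrt).trace).re < 1 := by
  set R := hρ.sqrt with hRdef
  set Q := hσ.sqrt with hQdef
  have hRh : R.IsHermitian := hρ.posSemidef_sqrt.isHermitian
  have hQh : Q.IsHermitian := hσ.posSemidef_sqrt.isHermitian
  have hS : (R - Q).IsHermitian := hRh.sub hQh
  set S : Matrix ι ι ℂ := R - Q with hSdef
  have hSid : mfun hS (fun x => x) = S := mfun_id hS
  have trS2 : ((S * S).trace).re = 2 - 2 * ((R * Q).trace).re := by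
    have e : S * S = ρ - R * Q - (Q * R - σ) := by
      rw [hSdef, Matrix.sub_mul, Matrix.mul_sub, Matrix.mul_sub, hρ.sqrt_mul_self,
        hσ.sqrt_mul_self]
    have tQR : ((Q * R).trace).re = ((R * Q).trace).re := by rw [Matrix.trace_mul_comm]
    rw [e]
    simp only [Matrix.trace_sub, Complex.sub_re, tρ, tσ]
    rw [tQR]
    simp only [Complex.one_re]
    ring
  have trS2' : ((S * S).trace).re = ∑ i, (hS.eigenvalues i)^2 := by
    have e : S * S = mfun hS (fun x => x^2) := by
      conv_lhs => rw [← hSid]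
      rw [mfun_mul]
      exact mfun_congr hS fun i => (sq (hS.eigenvalues i)).symm
    rw [e, trace_mfun]
    simp [Complex.re_sum, ← Complex.ofReal_pow]
  by_contra hcon
  push_neg at hcon
  have hsum : ∑ i, (hS.eigenvalues i)^2 ≤ 0 := by rw [← trS2', trS2]; linarith
  have hz : ∀ i ∈ Finset.univ, (hS.eigenvalues i)^2 = 0 := by
    intro i _
    have := Finset.sum_nonneg (fun j (_ : j ∈ Finset.univ) => sq_nonneg (hS.eigenvalues j))
    have h0 : ∑ i, (hS.eigenvalues i)^2 = 0 := le_antisymm hsum this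
    exact (Finset.sum_eq_zero_iff_of_nonneg
      (fun j _ => sq_nonneg (hS.eigenvalues j))).mp h0 i (Finset.mem_univ i)
  have hS0 : S = 0 := by
    rw [← hSid, mfun_congr hS (g := fun _ => (0:ℝ)) (fun i => by
      have := hz i (Finset.mem_univ i)
      exact pow_eq_zero_iff (n := 2) (by norm_num) |>.mp this), mfun_zero]
  have hRQ : R = Q := by rwa [hSdef, sub_eq_zero] at hS0
  exact hne (by rw [← hρ.sqrt_mul_self, ← hσ.sqrt_mul_self, ← hRdef, ← hQdef, hRQ])

end VC

namespace VC2
open VC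
variable {ι : Type*} [Fintype ι] [DecidableEq ι]

lemma kronPow_mul (A B : Matrix ι ι ℂ) (n : ℕ) :
    kronPow A n * kronPow B n = kronPow (A * B) n := by
  ext x y
  simp only [kronPow, Matrix.mul_apply, Matrix.of_apply]
  calc ∑ z : Fin n → ι, (∏ i, A (x i) (z i)) * ∏ i, B (z i) (y i)
      = ∑ z : Fin n → ι, ∏ i, (A (x i) (z i) * B (z i) (y i)) :=
        Finset.sum_congr rfl fun z _ => (Finset.prod_mul_distrib).symm
    _ = ∏ i, ∑ j, A (x i) j * B j (y i) := (Fintype.prod_sum (fun i j => A (x i) j * B j (y i))).symm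

lemma kronPow_trace (A : Matrix ι ι ℂ) (n : ℕ) : (kronPow A n).trace = A.trace ^ n := by
  calc (kronPow A n).trace = ∑ x : Fin n → ι, ∏ i, A (x i) (x i) := rfl
    _ = (∑ j, A j j) ^ n := (Fintype.sum_pow (fun j => A j j) n).symm
    _ = A.trace ^ n := rfl

lemma kronPow_conjTranspose (A : Matrix ι ι ℂ) (n : ℕ) :
    (kronPow A n)ᴴ = kronPow Aᴴ n := by
  ext x y
  simp only [kronPow, Matrix.conjTranspose_apply, Matrix.of_apply]
  rw [star_prod]

lemma kronPow_posSemidef {A : Matrix ι ι ℂ} (hA : A.PosSemidef) (n : ℕ) :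
    (kronPow A n).PosSemidef := by
  have hh : (kronPow hA.sqrt n)ᴴ = kronPow hA.sqrt n := by
    rw [kronPow_conjTranspose, hA.posSemidef_sqrt.isHermitian.eq]
  have e : kronPow A n = (kronPow hA.sqrt n)ᴴ * kronPow hA.sqrt n := by
    rw [hh, kronPow_mul, hA.sqrt_mul_self]
  rw [e]
  exact Matrix.posSemidef_conjTranspose_mul_self _

lemma kronPow_sqrt {A : Matrix ι ι ℂ} (hA : A.PosSemidef) (n : ℕ) :
    (kronPow_posSemidef hA n).sqrt = kronPow hA.sqrt n := by
  refine ((kronPow_posSemidef hA.posSemidef_sqrt n).eq_sqrt_of_sq_eq _ ?_).symm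
  rw [sq, kronPow_mul, hA.sqrt_mul_self]

end VC2

theorem virtual_cloning_stmt1 {d : ℕ} (ρ₁ ρ₂ : Matrix (Fin d) (Fin d) ℂ)
    (h₁ : IsDensity ρ₁) (h₂ : IsDensity ρ₂) (hne : ρ₁ ≠ ρ₂) :
    Filter.Tendsto (fun n => traceNorm (kronPow ρ₁ n - kronPow ρ₂ n))
      Filter.atTop (nhds 2) := by
  obtain ⟨hp₁, ht₁⟩ := h₁
  obtain ⟨hp₂, ht₂⟩ := h₂
  set c : ℝ := ((hp₁.sqrt * hp₂.sqrt).trace).re with hc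
  have hc0 : 0 ≤ c := VC.trace_mul_re_nonneg hp₁.posSemidef_sqrt hp₂.posSemidef_sqrt
  have hc1 : c < 1 := VC.re_trace_sqrt_mul_lt_one hp₁ hp₂ ht₁ ht₂ hne
  have hcC : (hp₁.sqrt * hp₂.sqrt).trace = (c : ℂ) :=
    VC.trace_mul_eq_re hp₁.posSemidef_sqrt.isHermitian hp₂.posSemidef_sqrt.isHermitian
  -- bounds for each n
  have hlow : ∀ n : ℕ, 2 - 2 * c ^ n ≤ traceNorm (kronPow ρ₁ n - kronPow ρ₂ n) := by
    intro n
    have p1 : (kronPow ρ₁ n).PosSemidef := VC2.kronPow_posSemidef hp₁ n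
    have p2 : (kronPow ρ₂ n).PosSemidef := VC2.kronPow_posSemidef hp₂ n
    have t1 : (kronPow ρ₁ n).trace = 1 := by rw [VC2.kronPow_trace, ht₁, one_pow]
    have t2 : (kronPow ρ₂ n).trace = 1 := by rw [VC2.kronPow_trace, ht₂, one_pow]
    have key := VC.powers_stormer p1 p2 t1 t2
    have e : ((p1.sqrt * p2.sqrt).trace).re = c ^ n := by
      rw [VC2.kronPow_sqrt hp₁ n, VC2.kronPow_sqrt hp₂ n, VC2.kronPow_mul,
        VC2.kronPow_trace, hcC, ← Complex.ofReal_pow, Complex.ofReal_re]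
    rwa [e] at key
  have hup : ∀ n : ℕ, traceNorm (kronPow ρ₁ n - kronPow ρ₂ n) ≤ 2 := by
    intro n
    exact VC.traceNorm_sub_le_two (VC2.kronPow_posSemidef hp₁ n) (VC2.kronPow_posSemidef hp₂ n)
      (by rw [VC2.kronPow_trace, ht₁, one_pow]) (by rw [VC2.kronPow_trace, ht₂, one_pow])
  have htend : Filter.Tendsto (fun n : ℕ => 2 - 2 * c ^ n) Filter.atTop (nhds 2) := by
    have h0 : Filter.Tendsto (fun n : ℕ => c ^ n) Filter.atTop (nhds 0) :=
      tendsto_pow_atTop_nhds_zero_of_lt_one hc0 hc1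
    have := (tendsto_const_nhds (x := (2:ℝ)) (f := Filter.atTop (α := ℕ))).sub
      (h0.const_mul 2)
    simpa using this
  exact tendsto_of_tendsto_of_tendsto_of_le_of_le htend tendsto_const_nhds hlow hup
end

section
/- For any set of m distinct density matrices ρ₁, …, ρ_m on ℂ^d, the states ρ₁^{⊗(m−1)}, …, ρ_m^{⊗(m−1)} are linearly independent over ℝ. Hence at most m − 1 copies suffice to make any m distinct states linearly independent. -/
open Matrix Kronecker BigOperators
open scoped ComplexOrder

/-- Auxiliary: trace of `kronPow A k` against an elementwise tensor product factorizes. -/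
lemma trace_kronPow_mul_aux {d k : ℕ} (A : Matrix (Fin d) (Fin d) ℂ)
    (B : Fin k → Matrix (Fin d) (Fin d) ℂ) :
    ((kronPow A k) * (Matrix.of fun x y : Fin k → Fin d => ∏ i, B i (x i) (y i))).trace
      = ∏ i, (A * (B i)).trace := by
  classical
  simp only [Matrix.trace, Matrix.diag, Matrix.mul_apply, kronPow, Matrix.of_apply]
  have h1 : ∀ x : Fin k → Fin d,
      (∑ y : Fin k → Fin d, (∏ i, A (x i) (y i)) * ∏ i, B i (y i) (x i))
        = ∏ i, ∑ j, A (x i) j * B i j (x i) := by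
    intro x
    rw [Fintype.prod_sum (fun i j => A (x i) j * B i j (x i))]
    exact Finset.sum_congr rfl fun y _ => (Finset.prod_mul_distrib).symm
  rw [Finset.sum_congr rfl fun x _ => h1 x,
    (Fintype.prod_sum (fun (i : Fin k) (j : Fin d) => ∑ j', A j j' * B i j' j)).symm]

/-- Auxiliary: trace of a matrix times a standard basis matrix picks an entry. -/
lemma trace_mul_stdBasisMatrix_aux {d : ℕ} (σ : Matrix (Fin d) (Fin d) ℂ) (a b : Fin d) :
    (σ * Matrix.single b a 1).trace = σ a b := by
  classical
  simp [Matrix.trace, Matrix.diag, Matrix.mul_apply, Matrix.single,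
    ite_and, Finset.sum_ite_eq, Finset.sum_ite_eq']

/-- Auxiliary: a separating linear functional exists. -/
lemma exists_separating_aux {d m : ℕ} (ρ : Fin m → Matrix (Fin d) (Fin d) ℂ)
    (hdist : Function.Injective ρ) :
    ∃ Y : Matrix (Fin d) (Fin d) ℂ, Function.Injective fun i => (ρ i * Y).trace := by
  classical
  by_contra h
  push_neg at h
  simp only [Function.not_injective_iff] at h
  set L : Matrix (Fin d) (Fin d) ℂ → (Matrix (Fin d) (Fin d) ℂ →ₗ[ℂ] ℂ) := fun σ =>
    (Matrix.traceLinearMap (Fin d) ℂ ℂ).comp (LinearMap.mulLeft ℂ σ) with hL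
  have hcover : ⋃ q : {q : Fin m × Fin m // q.1 ≠ q.2},
      ((LinearMap.ker (L (ρ q.1.1 - ρ q.1.2)) : Subspace ℂ (Matrix (Fin d) (Fin d) ℂ)) :
        Set (Matrix (Fin d) (Fin d) ℂ)) = Set.univ := by
    ext Y
    simp only [Set.mem_univ, iff_true, Set.mem_iUnion, SetLike.mem_coe, LinearMap.mem_ker]
    obtain ⟨a, b, hab, hne⟩ := h Y
    refine ⟨⟨(a, b), hne⟩, ?_⟩
    simp only [hL, LinearMap.comp_apply, LinearMap.mulLeft_apply, Matrix.traceLinearMap_apply,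
      Matrix.sub_mul, Matrix.trace_sub]
    rw [hab]; ring
  obtain ⟨q, hq⟩ := Subspace.exists_eq_top_of_iUnion_eq_univ hcover
  have hσ : ρ q.1.1 - ρ q.1.2 = 0 := by
    ext a b
    have hm : Matrix.single b a 1 ∈
        LinearMap.ker (L (ρ q.1.1 - ρ q.1.2)) := hq ▸ Submodule.mem_top
    rw [LinearMap.mem_ker] at hm
    simp only [hL, LinearMap.comp_apply, LinearMap.mulLeft_apply,
      Matrix.traceLinearMap_apply] at hm
    rw [trace_mul_stdBasisMatrix_aux] at hm
    simpa using hm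
  exact q.2 (hdist (sub_eq_zero.mp hσ))

theorem virtual_cloning_stmt7 {d m : ℕ} (ρ : Fin m → Matrix (Fin d) (Fin d) ℂ)
    (hρ : ∀ i, IsDensity (ρ i)) (hdist : Function.Injective ρ) :
    LinearIndependent ℝ (fun i => kronPow (ρ i) (m - 1)) := by
  classical
  rcases Nat.eq_zero_or_pos m with hm | hm
  · haveI : IsEmpty (Fin m) := by rw [hm]; infer_instance
    exact linearIndependent_empty_type
  obtain ⟨Y, hY⟩ := exists_separating_aux ρ hdist
  set y : Fin m → ℂ := fun i => (ρ i * Y).trace with hy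
  rw [Fintype.linearIndependent_iff]
  intro g hg i0
  have key : ∀ t : Fin m, ∑ i, (g i : ℂ) * y i ^ (t : ℕ) = 0 := by
    intro t
    set B : Fin (m - 1) → Matrix (Fin d) (Fin d) ℂ :=
      fun j => if (j : ℕ) < (t : ℕ) then Y else 1 with hB
    set M : Matrix (Fin (m-1) → Fin d) (Fin (m-1) → Fin d) ℂ :=
      Matrix.of fun x y' : Fin (m - 1) → Fin d => ∏ j, B j (x j) (y' j) with hM
    have h2 : ∀ i, (kronPow (ρ i) (m - 1) * M).trace = y i ^ (t : ℕ) := by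
      intro i
      rw [hM, trace_kronPow_mul_aux]
      have hBj : ∀ j : Fin (m - 1), (ρ i * B j).trace
          = if (j : ℕ) < (t : ℕ) then y i else 1 := by
        intro j
        by_cases hj : (j : ℕ) < (t : ℕ) <;> simp [hB, hj, hy, (hρ i).2]
      rw [Finset.prod_congr rfl fun j _ => hBj j, Finset.prod_ite, Finset.prod_const,
        Finset.prod_const_one, mul_one]
      congr 1
      have himg : (Finset.univ.filter fun j : Fin (m - 1) => (j : ℕ) < (t : ℕ)).map
          Fin.valEmbedding = Finset.range (t : ℕ) := by
        ext k
        simp only [Finset.mem_map, Finset.mem_filter, Finset.mem_univ, true_and,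
          Fin.valEmbedding_apply, Finset.mem_range]
        constructor
        · rintro ⟨j, hj, rfl⟩; exact hj
        · intro hk
          have ht : (t : ℕ) ≤ m - 1 := by omega
          exact ⟨⟨k, by omega⟩, hk, rfl⟩
      rw [← Finset.card_map, himg, Finset.card_range]
    have h3 := congrArg (fun X => (X * M).trace) hg
    simp only [Finset.sum_mul, Matrix.trace_sum, Matrix.smul_mul, Matrix.trace_smul,
      Matrix.zero_mul, Matrix.trace_zero] at h3
    rw [← h3]
    exact Finset.sum_congr rfl fun i _ => by rw [h2 i, Complex.real_smul]
  have hv : Matrix.vecMul (fun i => (g i : ℂ)) (Matrix.vandermonde y) = 0 := by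
    ext t
    simpa [Matrix.vecMul, Matrix.vandermonde, dotProduct] using key t
  have hdet : (Matrix.vandermonde y).det ≠ 0 := by
    rw [Matrix.det_vandermonde]
    refine Finset.prod_ne_zero_iff.mpr fun i _ => Finset.prod_ne_zero_iff.mpr fun j hj => ?_
    refine sub_ne_zero.mpr fun hEq => ?_
    exact (Finset.mem_Ioi.mp hj).ne' (hY hEq)
  have h0 := Matrix.eq_zero_of_vecMul_eq_zero hdet hv
  have := congrFun h0 i0
  rw [Pi.zero_apply] at this
  exact_mod_cast this
end

section
/- There exists a Hermitian-preserving trace-preserving linear map Λ̃ from 2×2 matrices to 4×4 matrices such that Λ̃(|0⟩⟨0|) = |0⟩⟨0| ⊗ |0⟩⟨0| and Λ̃(|+⟩⟨+|) = |+⟩⟨+| ⊗ |+⟩⟨+|, where |+⟩ = (|0⟩+|1⟩)/√2. Specifically, the map defined by Λ̃(𝟙₂) = ½ 𝟙₂⊗𝟙₂ and Λ̃(σᵢ) = ½(σᵢ⊗𝟙₂ + 𝟙₂⊗σᵢ + σᵢ⊗σᵢ) for i ∈ {x,y,z} satisfies these conditions. -/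
open Matrix Kronecker BigOperators
open scoped ComplexOrder

noncomputable def pauliX : Matrix (Fin 2) (Fin 2) ℂ := !![0, 1; 1, 0]
noncomputable def pauliY : Matrix (Fin 2) (Fin 2) ℂ := !![0, -Complex.I; Complex.I, 0]
noncomputable def pauliZ : Matrix (Fin 2) (Fin 2) ℂ := !![1, 0; 0, -1]
noncomputable def proj0 : Matrix (Fin 2) (Fin 2) ℂ := !![1, 0; 0, 0]
noncomputable def projPlus : Matrix (Fin 2) (Fin 2) ℂ := !![1/2, 1/2; 1/2, 1/2]

noncomputable def myT1 : Matrix (Fin 2 × Fin 2) (Fin 2 × Fin 2) ℂ :=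
  (1/2 : ℂ) • ((1 : Matrix (Fin 2) (Fin 2) ℂ) ⊗ₖ (1 : Matrix (Fin 2) (Fin 2) ℂ))

noncomputable def myTs (σ : Matrix (Fin 2) (Fin 2) ℂ) : Matrix (Fin 2 × Fin 2) (Fin 2 × Fin 2) ℂ :=
  (1/2 : ℂ) • (σ ⊗ₖ (1 : Matrix (Fin 2) (Fin 2) ℂ)
      + (1 : Matrix (Fin 2) (Fin 2) ℂ) ⊗ₖ σ + σ ⊗ₖ σ)

noncomputable def myLam : Matrix (Fin 2) (Fin 2) ℂ →ₗ[ℂ] Matrix (Fin 2 × Fin 2) (Fin 2 × Fin 2) ℂ where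
  toFun A := ((A 0 0 + A 1 1)/2) • myT1 + ((A 0 1 + A 1 0)/2) • myTs pauliX
    + (Complex.I * (A 0 1 - A 1 0)/2) • myTs pauliY + ((A 0 0 - A 1 1)/2) • myTs pauliZ
  map_add' A B := by
    simp only [Matrix.add_apply]
    module
  map_smul' c A := by
    simp only [Matrix.smul_apply, smul_eq_mul, RingHom.id_apply]
    module

lemma myLam_one : myLam 1 = myT1 := by
  simp only [myLam, LinearMap.coe_mk, AddHom.coe_mk]
  simp [Matrix.one_apply]

lemma myLam_X : myLam pauliX = myTs pauliX := by
  simp only [myLam, LinearMap.coe_mk, AddHom.coe_mk]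
  simp [pauliX]

lemma myLam_Y : myLam pauliY = myTs pauliY := by
  simp only [myLam, LinearMap.coe_mk, AddHom.coe_mk]
  simp [pauliY]
  match_scalars <;> ring_nf <;> simp [Complex.I_sq]

lemma myLam_Z : myLam pauliZ = myTs pauliZ := by
  simp only [myLam, LinearMap.coe_mk, AddHom.coe_mk]
  simp [pauliZ]

lemma myLam_proj0 : myLam proj0 = proj0 ⊗ₖ proj0 := by
  simp only [myLam, LinearMap.coe_mk, AddHom.coe_mk]
  ext ⟨i,k⟩ ⟨j,l⟩
  fin_cases i <;> fin_cases k <;> fin_cases j <;> fin_cases l <;>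
    simp [myT1, myTs, proj0, pauliZ, Matrix.one_apply, Matrix.kroneckerMap_apply] <;> norm_num [Prod.ext_iff]

lemma myLam_projPlus : myLam projPlus = projPlus ⊗ₖ projPlus := by
  simp only [myLam, LinearMap.coe_mk, AddHom.coe_mk]
  ext ⟨i,k⟩ ⟨j,l⟩
  fin_cases i <;> fin_cases k <;> fin_cases j <;> fin_cases l <;>
    simp [myT1, myTs, projPlus, pauliX, pauliY, pauliZ, Matrix.one_apply,
      Matrix.kroneckerMap_apply] <;> norm_num [Prod.ext_iff]

lemma myLam_trace (A : Matrix (Fin 2) (Fin 2) ℂ) : (myLam A).trace = A.trace := by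
  simp only [myLam, LinearMap.coe_mk, AddHom.coe_mk]
  simp [Matrix.trace, Fintype.sum_prod_type, Fin.sum_univ_two, myT1, myTs,
    pauliX, pauliY, pauliZ, Matrix.one_apply, Matrix.kroneckerMap_apply]
  ring

lemma hT1 : myT1.conjTranspose = myT1 := by
  ext ⟨i,k⟩ ⟨j,l⟩
  fin_cases i <;> fin_cases k <;> fin_cases j <;> fin_cases l <;>
    simp [myT1, Matrix.one_apply, Matrix.kroneckerMap_apply] <;> norm_num [Prod.ext_iff] <;> ring

lemma hTX : (myTs pauliX).conjTranspose = myTs pauliX := by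
  ext ⟨i,k⟩ ⟨j,l⟩
  fin_cases i <;> fin_cases k <;> fin_cases j <;> fin_cases l <;>
    simp [myTs, pauliX, Matrix.one_apply, Matrix.kroneckerMap_apply] <;> norm_num [Prod.ext_iff] <;> ring

lemma hTY : (myTs pauliY).conjTranspose = myTs pauliY := by
  ext ⟨i,k⟩ ⟨j,l⟩
  fin_cases i <;> fin_cases k <;> fin_cases j <;> fin_cases l <;>
    simp [myTs, pauliY, Matrix.one_apply, Matrix.kroneckerMap_apply, Complex.conj_I] <;> norm_num [Prod.ext_iff] <;> ring

lemma hTZ : (myTs pauliZ).conjTranspose = myTs pauliZ := by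
  ext ⟨i,k⟩ ⟨j,l⟩
  fin_cases i <;> fin_cases k <;> fin_cases j <;> fin_cases l <;>
    simp [myTs, pauliZ, Matrix.one_apply, Matrix.kroneckerMap_apply] <;> norm_num [Prod.ext_iff] <;> ring

lemma myLam_herm (A : Matrix (Fin 2) (Fin 2) ℂ) (hA : A.IsHermitian) :
    (myLam A).IsHermitian := by
  have h00 : (starRingEnd ℂ) (A 0 0) = A 0 0 := hA.apply 0 0
  have h11 : (starRingEnd ℂ) (A 1 1) = A 1 1 := hA.apply 1 1
  have h01 : (starRingEnd ℂ) (A 1 0) = A 0 1 := hA.apply 0 1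
  have h10 : (starRingEnd ℂ) (A 0 1) = A 1 0 := hA.apply 1 0
  have e0 : star ((A 0 0 + A 1 1)/2) = (A 0 0 + A 1 1)/2 := by
    simp only [Complex.star_def, map_div₀, map_add, map_ofNat, h00, h11]
  have ex : star ((A 0 1 + A 1 0)/2) = (A 0 1 + A 1 0)/2 := by
    simp only [Complex.star_def, map_div₀, map_add, map_ofNat, h01, h10]
    ring
  have ey : star (Complex.I * (A 0 1 - A 1 0)/2) = Complex.I * (A 0 1 - A 1 0)/2 := by
    simp only [Complex.star_def, map_div₀, _root_.map_mul, map_sub, map_ofNat, Complex.conj_I, h01, h10]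
    ring
  have ez : star ((A 0 0 - A 1 1)/2) = (A 0 0 - A 1 1)/2 := by
    simp only [Complex.star_def, map_div₀, map_sub, map_ofNat, h00, h11]
  show (myLam A).conjTranspose = myLam A
  simp only [myLam, LinearMap.coe_mk, AddHom.coe_mk, Matrix.conjTranspose_add,
    Matrix.conjTranspose_smul, hT1, hTX, hTY, hTZ, e0, ex, ey, ez]

theorem virtual_cloning_stmt8 :
    ∃ Λ : Matrix (Fin 2) (Fin 2) ℂ →ₗ[ℂ] Matrix (Fin 2 × Fin 2) (Fin 2 × Fin 2) ℂ,
      IsHPTP Λ ∧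
      Λ (1 : Matrix (Fin 2) (Fin 2) ℂ)
        = (1/2 : ℂ) • ((1 : Matrix (Fin 2) (Fin 2) ℂ) ⊗ₖ (1 : Matrix (Fin 2) (Fin 2) ℂ)) ∧
      (∀ σ ∈ ({pauliX, pauliY, pauliZ} : Set (Matrix (Fin 2) (Fin 2) ℂ)),
        Λ σ = (1/2 : ℂ) • (σ ⊗ₖ (1 : Matrix (Fin 2) (Fin 2) ℂ)
          + (1 : Matrix (Fin 2) (Fin 2) ℂ) ⊗ₖ σ + σ ⊗ₖ σ)) ∧
      Λ proj0 = proj0 ⊗ₖ proj0 ∧ Λ projPlus = projPlus ⊗ₖ projPlus := by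
  refine ⟨myLam, ⟨myLam_herm, myLam_trace⟩, myLam_one, ?_, myLam_proj0, myLam_projPlus⟩
  intro σ hσ
  simp only [Set.mem_insert_iff, Set.mem_singleton_iff] at hσ
  rcases hσ with rfl | rfl | rfl
  · exact myLam_X
  · exact myLam_Y
  · exact myLam_Z
end
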